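/- Let E be the hyperation of e and L the cohyperation of the end-logarithm ℓ. Then for all ordinals ρ, β, ξ: L(ω^ρ)(E(ω^β)(ξ)) equals E(ω^β)(ξ) if ω^ρ < ω^β; equals ξ if ω^ρ = ω^β; and equals L(ω^ρ)(ξ) if ω^ρ > ω^β. -/

import Mathlib

/-!
The hyperation `E` of `e` is explicit: with `eVeblen 0 = e` and, for `γ ≠ 0`, `eVeblen γ` the
enumeration of the common fixed points of the `eVeblen a`, `a < γ`, one has `E (ω ^ γ) = eVeblen γ`,
and `E ξ` composes the `eVeblen aᵢ` along the Cantor normal form of `ξ`.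

The heart of the matter is `L ξ ∘ E ξ = id`, by induction on `ξ`; only `ξ = ω ^ γ` needs an idea.
Maximality of `L`, tested against an explicit weak cohyperation of `ℓ` whose `ω ^ γ`-th member
inverts `eVeblen γ`, gives `x ≤ L ξ (E ξ x)`. Conversely, every `α` descends through the lower
`L (ω ^ a)`, which do not change `L (ω ^ γ) α`, to some `eVeblen γ y ≤ α`; as `L (ω ^ γ)` is
initial, this forces `L ξ (E ξ x) ≤ x`.

The three cases then follow from `η + ω ^ γ = ω ^ γ` for `η < ω ^ γ`, which gives
`E (ω ^ γ) = E η ∘ E (ω ^ γ)` and `L (ω ^ γ) = L (ω ^ γ) ∘ L η`.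
-/

open Ordinal

/-- `g` is a weak hyperation of the normal function `f`: a family of normal
functions with `g 0 = id`, `g 1 = f`, and `g (ξ + ζ) = g ξ ∘ g ζ`. -/
def IsWeakHyperation (f : Ordinal → Ordinal) (g : Ordinal → Ordinal → Ordinal) : Prop :=
  (∀ ξ : Ordinal, Order.IsNormal (g ξ)) ∧
  g 0 = id ∧ g 1 = f ∧ ∀ ξ ζ : Ordinal, g (ξ + ζ) = g ξ ∘ g ζ

/-- `g` is the hyperation of `f`: the pointwise minimal weak hyperation of `f`. -/
def IsHyperation (f : Ordinal → Ordinal) (g : Ordinal → Ordinal → Ordinal) : Prop :=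
  IsWeakHyperation f g ∧
  ∀ h : Ordinal → Ordinal → Ordinal, IsWeakHyperation f h → ∀ ξ ζ : Ordinal, g ξ ζ ≤ h ξ ζ

/-- `f` is initial: the image under `f` of every initial segment `[0, β)` of the
ordinals is again an initial segment. -/
def IsInitialFun (f : Ordinal → Ordinal) : Prop :=
  ∀ β : Ordinal, ∃ γ : Ordinal, f '' Set.Iio β = Set.Iio γ

/-- `g` is a weak cohyperation of the initial function `f`: a family of initial
functions with `g 0 = id`, `g 1 = f`, and `g (ξ + ζ) = g ζ ∘ g ξ`. -/
def IsWeakCohyperation (f : Ordinal → Ordinal) (g : Ordinal → Ordinal → Ordinal) : Prop :=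
  (∀ ξ : Ordinal, IsInitialFun (g ξ)) ∧
  g 0 = id ∧ g 1 = f ∧ ∀ ξ ζ : Ordinal, g (ξ + ζ) = g ζ ∘ g ξ

/-- `g` is the cohyperation of `f`: the pointwise maximal weak cohyperation of `f`. -/
def IsCohyperation (f : Ordinal → Ordinal) (g : Ordinal → Ordinal → Ordinal) : Prop :=
  IsWeakCohyperation f g ∧
  ∀ h : Ordinal → Ordinal → Ordinal, IsWeakCohyperation f h → ∀ ξ ζ : Ordinal, h ξ ζ ≤ g ξ ζ

/-- `e` is the normal function enumerating `{0} ∪ { ω^(1+α) : α an ordinal }`. -/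
noncomputable def eFun : Ordinal → Ordinal :=
  enumOrd ({0} ∪ { x : Ordinal | ∃ α : Ordinal, x = ω ^ (1 + α) })

/-- `ell` is the end-logarithm: `ell 0 = 0` and, for `α > 0`, `ell α` is the (unique)
exponent of the last term of the Cantor normal form of `α`, i.e. `α = γ + ω ^ ell α`
for some `γ`. -/
def IsEndLog (ell : Ordinal → Ordinal) : Prop :=
  ell 0 = 0 ∧ ∀ α : Ordinal, 0 < α → ∃ γ : Ordinal, α = γ + ω ^ ell α


open Set

universe u v

namespace Ordinal

theorem eq_of_omega0_opow_eq_add_omega0_opow {d b c : Ordinal} (h : ω ^ b = d + ω ^ c) :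
    b = c := by
  have hcb : c ≤ b := (opow_le_opow_iff_right one_lt_omega0).1 (h ▸ le_add_self)
  refine le_antisymm (not_lt.1 fun hlt => ?_) hcb
  rcases lt_or_ge d (ω ^ b) with hd | hd
  · exact (isPrincipal_add_omega0_opow b hd
      ((opow_lt_opow_iff_right one_lt_omega0).2 hlt)).ne h.symm
  · exact (hd.trans_lt (lt_add_of_pos_right d (opow_pos c omega0_pos))).ne h

theorem eq_of_add_omega0_opow_eq {γ₁ γ₂ b₁ b₂ : Ordinal}
    (h : γ₁ + ω ^ b₁ = γ₂ + ω ^ b₂) : b₁ = b₂ := by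
  wlog hγ : γ₁ ≤ γ₂ generalizing γ₁ γ₂ b₁ b₂
  · exact (this h.symm (le_of_not_ge hγ)).symm
  rw [← Ordinal.add_sub_cancel_of_le hγ, add_assoc, add_right_inj] at h
  exact eq_of_omega0_opow_eq_add_omega0_opow h

theorem exists_omega0_opow_add {ξ : Ordinal} (hξ : ξ ≠ 0) :
    ∃ γ r : Ordinal, ω ^ γ + r = ξ ∧ r < ξ ∧ ξ < ω ^ (γ + 1) :=
  ⟨_, _, Ordinal.add_sub_cancel_of_le (opow_log_le_self ω hξ), sub_omega0_opow_log_lt hξ,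
    Order.succ_eq_add_one (log ω ξ) ▸ lt_opow_succ_log_self one_lt_omega0 ξ⟩

theorem induction_on_omega0_opow_add {p : Ordinal → Prop} (ξ : Ordinal) (zero : p 0)
    (opow : ∀ γ : Ordinal, (∀ η < ω ^ γ, p η) → p (ω ^ γ))
    (add : ∀ a b, a < a + b → b < a + b → p a → p b → p (a + b)) : p ξ := by
  induction ξ using WellFoundedLT.induction with
  | _ ξ IH =>
    rcases eq_or_ne ξ 0 with rfl | hξ
    · exact zero
    obtain ⟨γ, r, rfl, hr, -⟩ := exists_omega0_opow_add hξ
    rcases eq_or_ne r 0 with rfl | hr0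
    · rw [add_zero] at IH ⊢
      exact opow γ IH
    · have hγ : ω ^ γ < ω ^ γ + r := lt_add_of_pos_right _ (pos_iff_ne_zero.2 hr0)
      exact add _ _ hγ hr (IH _ hγ) (IH _ hr)

theorem log_omega0_opow_add {γ ξ : Ordinal} (h : ξ < ω ^ (γ + 1)) :
    log ω (ω ^ γ + ξ) = γ := by
  rw [log_eq_iff one_lt_omega0 (opow_pos γ omega0_pos |>.trans_le le_self_add).ne']
  exact ⟨le_self_add, isPrincipal_add_omega0_opow _
    ((opow_lt_opow_iff_right one_lt_omega0).2 (lt_add_one γ)) h⟩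

section CNFProduct

variable {M : Type*} [Monoid M] (g : Ordinal.{v} → M)

/-- The product `g a₁ * ⋯ * g aₙ` along the Cantor normal form `ω ^ a₁ + ⋯ + ω ^ aₙ`
of `ξ`. -/
noncomputable def cnfProd (ξ : Ordinal.{v}) : M :=
  if h : ξ = 0 then 1 else
    have := sub_omega0_opow_log_lt h
    g (log ω ξ) * cnfProd (ξ - ω ^ log ω ξ)
termination_by ξ

@[simp]
theorem cnfProd_zero : cnfProd g 0 = 1 := by
  rw [cnfProd, dif_pos rfl]

theorem cnfProd_of_ne_zero {ξ : Ordinal} (h : ξ ≠ 0) :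
    cnfProd g ξ = g (log ω ξ) * cnfProd g (ξ - ω ^ log ω ξ) := by
  rw [cnfProd, dif_neg h]

theorem cnfProd_omega0_opow_add {γ ξ : Ordinal} (h : ξ < ω ^ (γ + 1)) :
    cnfProd g (ω ^ γ + ξ) = g γ * cnfProd g ξ := by
  have hne : ω ^ γ + ξ ≠ 0 := (opow_pos γ omega0_pos |>.trans_le le_self_add).ne'
  rw [cnfProd_of_ne_zero g hne, log_omega0_opow_add h, Ordinal.add_sub_cancel]

@[simp]
theorem cnfProd_omega0_opow (γ : Ordinal) : cnfProd g (ω ^ γ) = g γ := by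
  simpa using cnfProd_omega0_opow_add g (opow_pos (γ + 1) omega0_pos)

@[simp]
theorem cnfProd_one : cnfProd g 1 = g 0 := by
  simpa using cnfProd_omega0_opow g 0

theorem cnfProd_induction {p : M → Prop} (one : p 1) (mul : ∀ a b, p a → p b → p (a * b))
    (hg : ∀ γ, p (g γ)) (ξ : Ordinal) : p (cnfProd g ξ) := by
  induction ξ using WellFoundedLT.induction with
  | _ ξ IH =>
    rcases eq_or_ne ξ 0 with rfl | hξ
    · rwa [cnfProd_zero]
    · rw [cnfProd_of_ne_zero g hξ]
      exact mul _ _ (hg _) (IH _ (sub_omega0_opow_log_lt hξ))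

variable {g} (habs : ∀ a b, a < b → g a * g b = g b)
include habs

theorem cnfProd_mul_of_lt_omega0_opow {ξ c : Ordinal} (hξ : ξ < ω ^ c) :
    cnfProd g ξ * g c = g c := by
  induction ξ using WellFoundedLT.induction with
  | _ ξ IH =>
    rcases eq_or_ne ξ 0 with rfl | hξ0
    · rw [cnfProd_zero, one_mul]
    have hlog : log ω ξ < c :=
      (opow_lt_opow_iff_right one_lt_omega0).1 ((opow_log_le_self ω hξ0).trans_lt hξ)
    rw [cnfProd_of_ne_zero g hξ0, mul_assoc, IH _ (sub_omega0_opow_log_lt hξ0)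
      ((sub_omega0_opow_log_lt hξ0).trans hξ), habs _ _ hlog]

theorem cnfProd_add (x y : Ordinal) :
    cnfProd g (x + y) = cnfProd g x * cnfProd g y := by
  induction x using WellFoundedLT.induction with
  | _ x IH =>
    rcases eq_or_ne x 0 with rfl | hx0
    · rw [zero_add, cnfProd_zero, one_mul]
    obtain ⟨γ, r, rfl, hr, hx⟩ := exists_omega0_opow_add hx0
    have hrγ : r < ω ^ (γ + 1) := hr.trans hx
    by_cases hy : y < ω ^ (γ + 1)
    · rw [add_assoc, cnfProd_omega0_opow_add g (isPrincipal_add_omega0_opow _ hrγ hy), IH r hr,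
        cnfProd_omega0_opow_add g hrγ, mul_assoc]
    · rw [not_lt] at hy
      have hy0 : y ≠ 0 := (opow_pos _ omega0_pos).trans_le hy |>.ne'
      have hxy : ω ^ γ + r < ω ^ log ω y :=
        hx.trans_le (opow_le_opow_right omega0_pos ((opow_le_iff_le_log one_lt_omega0 hy0).1 hy))
      rw [add_of_omega0_opow_le hx hy, cnfProd_of_ne_zero g hy0, ← mul_assoc,
        cnfProd_mul_of_lt_omega0_opow habs hxy]

end CNFProduct

end Ordinal

theorem strictMono_ite_omega0_opow :
    StrictMono fun x : Ordinal.{u} => if x = 0 then 0 else ω ^ x := by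
  intro x y hxy
  have hy : y ≠ 0 := (zero_le.trans_lt hxy).ne'
  rcases eq_or_ne x 0 with rfl | hx
  · simpa [hy] using opow_pos y omega0_pos
  · simpa [hx, hy] using (opow_lt_opow_iff_right one_lt_omega0).2 hxy

theorem eFun_eq : eFun = fun x => if x = 0 then 0 else ω ^ x := by
  have hrange : range (fun x : Ordinal => if x = 0 then 0 else ω ^ x) =
      {0} ∪ {x | ∃ α : Ordinal, x = ω ^ (1 + α)} := by
    ext b
    constructor
    · rintro ⟨x, rfl⟩
      rcases eq_or_ne x 0 with rfl | hx
      · simp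
      · refine Or.inr ⟨x - 1, ?_⟩
        simp [hx, Ordinal.add_sub_cancel_of_le (Order.one_le_iff_ne_zero.2 hx)]
    · rintro (rfl | ⟨α, rfl⟩)
      · exact ⟨0, by simp⟩
      · exact ⟨1 + α, by simp⟩
  have hunb := hrange ▸ strictMono_ite_omega0_opow.not_bddAbove_range_of_wellFoundedLT
  exact (eq_enumOrd _ hunb).2 ⟨strictMono_ite_omega0_opow, hrange⟩

@[simp]
theorem eFun_zero : eFun 0 = 0 := by
  simp [eFun_eq]

theorem eFun_of_ne_zero {x : Ordinal} (hx : x ≠ 0) : eFun x = ω ^ x := by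
  simp [eFun_eq, hx]

theorem isNormal_eFun : Order.IsNormal eFun := by
  refine Order.isNormal_iff.2 ⟨eFun_eq ▸ strictMono_ite_omega0_opow, fun o ho a ha => ?_⟩
  rw [eFun_of_ne_zero ho.ne_bot, (isNormal_opow one_lt_omega0).le_iff_forall_le ho]
  intro b hb
  calc ω ^ b ≤ ω ^ (b + 1) := opow_le_opow_right omega0_pos (lt_add_one b).le
    _ = eFun (b + 1) := (eFun_of_ne_zero (add_pos_of_right zero_lt_one b).ne').symm
    _ ≤ a := ha _ (ho.add_one_lt hb)

theorem IsInitialFun.apply_le {f : Ordinal → Ordinal} (hf : IsInitialFun f) (α : Ordinal) :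
    f α ≤ α := by
  induction α using WellFoundedLT.induction with
  | _ α IH =>
    obtain ⟨γ, hγ⟩ := hf (α + 1)
    by_contra! hlt
    obtain ⟨β, hβ, hfβ⟩ : α ∈ f '' Iio (α + 1) := by
      rw [hγ]
      have hfα : f α ∈ Iio γ := hγ ▸ mem_image_of_mem f (lt_add_one α)
      exact hlt.trans hfα
    rcases (Order.lt_add_one_iff.1 (mem_Iio.1 hβ)).lt_or_eq with hβα | rfl
    · exact (IH β hβα).not_gt (hβα.trans_eq hfβ.symm)
    · exact hlt.ne hfβ.symm

theorem IsInitialFun.comp {f g : Ordinal → Ordinal} (hf : IsInitialFun f)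
    (hg : IsInitialFun g) : IsInitialFun (f ∘ g) := by
  intro β
  obtain ⟨γ, hγ⟩ := hg β
  obtain ⟨δ, hδ⟩ := hf γ
  exact ⟨δ, by rw [image_comp, hγ, hδ]⟩

theorem isInitialFun_id : IsInitialFun id :=
  fun β => ⟨β, image_id _⟩

theorem isInitialFun_of_apply_le {f : Ordinal → Ordinal} (hle : ∀ α, f α ≤ α)
    (hlower : ∀ β, IsLowerSet (f '' Iio β)) : IsInitialFun f := by
  intro β
  refine ((hlower β).eq_univ_or_Iio).resolve_left fun h => ?_
  obtain ⟨α, hα, hfα⟩ : β ∈ f '' Iio β := h ▸ mem_univ β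
  exact ((hle α).trans_lt hα).ne hfα

namespace IsEndLog

variable {ell : Ordinal.{u} → Ordinal.{u}}

theorem apply_add_omega0_opow (hell : IsEndLog ell) (γ v : Ordinal) : ell (γ + ω ^ v) = v := by
  obtain ⟨γ', h⟩ := hell.2 _ ((opow_pos v omega0_pos).trans_le le_add_self)
  exact (eq_of_add_omega0_opow_eq h).symm

theorem apply_le (hell : IsEndLog ell) (α : Ordinal) : ell α ≤ α := by
  rcases eq_or_ne α 0 with rfl | hα
  · exact hell.1.le
  obtain ⟨γ, h⟩ := hell.2 α (pos_iff_ne_zero.2 hα)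
  calc ell α ≤ ω ^ ell α := right_le_opow _ one_lt_omega0
    _ ≤ γ + ω ^ ell α := le_add_self
    _ = α := h.symm

theorem apply_eFun (hell : IsEndLog ell) (x : Ordinal) : ell (eFun x) = x := by
  rcases eq_or_ne x 0 with rfl | hx
  · rw [eFun_zero, hell.1]
  · simpa [eFun_of_ne_zero hx] using hell.apply_add_omega0_opow 0 x

theorem eFun_eq_of_apply_eq (hell : IsEndLog ell) {α : Ordinal} (h : ell α = α) :
    eFun α = α := by
  rcases eq_or_ne α 0 with rfl | hα
  · exact eFun_zero
  obtain ⟨γ, hγ⟩ := hell.2 α (pos_iff_ne_zero.2 hα)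
  rw [h] at hγ
  rw [eFun_of_ne_zero hα]
  exact (hγ ▸ le_add_self).antisymm (right_le_opow _ one_lt_omega0)

theorem isInitialFun (hell : IsEndLog ell) : IsInitialFun ell := by
  refine isInitialFun_of_apply_le hell.apply_le fun β y z hzy ⟨α, hα, hy⟩ => ?_
  subst hy
  rcases eq_or_ne α 0 with rfl | hα0
  · exact ⟨0, hα, by rw [hell.1] at hzy ⊢; exact (nonpos_iff_eq_zero.1 hzy).symm⟩
  obtain ⟨γ, hγ⟩ := hell.2 α (pos_iff_ne_zero.2 hα0)
  refine ⟨γ + ω ^ z, ?_, hell.apply_add_omega0_opow γ z⟩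
  calc γ + ω ^ z ≤ γ + ω ^ ell α := add_le_add_right (opow_le_opow_right omega0_pos hzy) γ
    _ < β := hγ ▸ hα

end IsEndLog

theorem IsWeakHyperation.apply_add {f : Ordinal.{u} → Ordinal.{u}}
    {F : Ordinal.{v} → Ordinal.{u} → Ordinal.{u}} (hF : IsWeakHyperation f F)
    (ξ ζ : Ordinal.{v}) (x : Ordinal.{u}) : F (ξ + ζ) x = F ξ (F ζ x) :=
  congrFun (hF.2.2.2 ξ ζ) x

theorem IsWeakHyperation.apply_apply_omega0_opow {f : Ordinal.{u} → Ordinal.{u}}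
    {F : Ordinal.{v} → Ordinal.{u} → Ordinal.{u}} (hF : IsWeakHyperation f F)
    {η γ : Ordinal.{v}} (h : η < ω ^ γ) (x : Ordinal.{u}) :
    F η (F (ω ^ γ) x) = F (ω ^ γ) x := by
  rw [← hF.apply_add, add_of_omega0_opow_le h le_rfl]

/-- `eVeblen γ` is the `ω ^ γ`-th member of the hyperation of `e`. -/
noncomputable def eVeblen : Ordinal.{v} → Ordinal.{u} → Ordinal.{u}
  | γ => if γ = 0 then eFun else enumOrd {α | ∀ a < γ, eVeblen a α = α}
termination_by γ => γ
decreasing_by exact ‹_ < _›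

def eVeblenFix (γ : Ordinal.{v}) : Set Ordinal.{u} := {α | ∀ a < γ, eVeblen a α = α}

theorem eVeblen_zero : eVeblen.{u, v} 0 = eFun := by
  rw [eVeblen, if_pos rfl]

theorem eVeblen_of_ne_zero {γ : Ordinal.{v}} (hγ : γ ≠ 0) :
    eVeblen.{u, v} γ = enumOrd (eVeblenFix γ) := by
  rw [eVeblen, if_neg hγ, eVeblenFix]

@[simp]
theorem eVeblen_apply_zero (γ : Ordinal.{v}) : eVeblen γ (0 : Ordinal.{u}) = 0 := by
  induction γ using WellFoundedLT.induction with
  | _ γ IH =>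
    rcases eq_or_ne γ 0 with rfl | hγ
    · rw [eVeblen_zero, eFun_zero]
    · rw [eVeblen_of_ne_zero hγ, enumOrd_zero]
      exact nonpos_iff_eq_zero.1 (csInf_le' fun a ha => IH a ha)

theorem zero_mem_eVeblenFix (γ : Ordinal.{v}) : (0 : Ordinal.{u}) ∈ eVeblenFix γ :=
  fun a _ => eVeblen_apply_zero a

theorem isNormal_eVeblen_of_forall_le (γ : Ordinal.{v})
    (hunb : ∀ a ≤ γ, ¬BddAbove (eVeblenFix.{u, v} a)) :
    Order.IsNormal (eVeblen.{u, v} γ) := by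
  induction γ using WellFoundedLT.induction with
  | _ γ IH =>
    rcases eq_or_ne γ 0 with rfl | hγ
    · rw [eVeblen_zero]
      exact isNormal_eFun
    rw [eVeblen_of_ne_zero hγ]
    refine isNormal_enumOrd (fun t ht htne htbdd a ha => ?_) (hunb γ le_rfl)
    rw [(IH a ha fun b hb => hunb b (hb.trans ha.le)).map_sSup htne htbdd,
      image_congr fun x hx => ht hx a ha, image_id']

noncomputable def hyperexp (ξ : Ordinal.{v}) : Ordinal.{u} → Ordinal.{u} :=
  cnfProd (M := Function.End Ordinal.{u}) eVeblen ξ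

@[simp]
theorem hyperexp_omega0_opow (γ : Ordinal.{v}) : hyperexp.{u, v} (ω ^ γ) = eVeblen γ :=
  cnfProd_omega0_opow (M := Function.End _) _ γ

section Unbounded

variable (hunb : ∀ γ : Ordinal.{v}, ¬BddAbove (eVeblenFix.{u, v} γ))
include hunb

theorem isNormal_eVeblen (γ : Ordinal.{v}) : Order.IsNormal (eVeblen.{u, v} γ) :=
  isNormal_eVeblen_of_forall_le γ fun a _ => hunb a

theorem range_eVeblen {γ : Ordinal.{v}} (hγ : γ ≠ 0) :
    range (eVeblen.{u, v} γ) = eVeblenFix γ := by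
  rw [eVeblen_of_ne_zero hγ, range_enumOrd (hunb γ)]

theorem eVeblen_mem_eVeblenFix {γ : Ordinal.{v}} (hγ : γ ≠ 0) (x : Ordinal.{u}) :
    eVeblen γ x ∈ eVeblenFix γ :=
  range_eVeblen hunb hγ ▸ mem_range_self x

theorem eVeblen_invFun {γ : Ordinal.{v}} (hγ : γ ≠ 0) {ζ : Ordinal.{u}}
    (hζ : ζ ∈ eVeblenFix γ) :
    eVeblen γ (Function.invFun (eVeblen γ) ζ) = ζ :=
  Function.invFun_eq (show ζ ∈ range (eVeblen γ) from range_eVeblen hunb hγ ▸ hζ)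

theorem eVeblen_eVeblen_of_lt {a γ : Ordinal.{v}} (h : a < γ) (x : Ordinal.{u}) :
    eVeblen a (eVeblen γ x) = eVeblen γ x :=
  eVeblen_mem_eVeblenFix hunb (zero_le.trans_lt h).ne' x a h

theorem hyperexp_add (a b : Ordinal.{v}) :
    hyperexp.{u, v} (a + b) = hyperexp a ∘ hyperexp b :=
  cnfProd_add (M := Function.End _) (fun _ _ h => funext (eVeblen_eVeblen_of_lt hunb h)) a b

theorem isNormal_hyperexp (ξ : Ordinal.{v}) : Order.IsNormal (hyperexp.{u, v} ξ) :=
  cnfProd_induction (p := fun f : Function.End _ => Order.IsNormal f) _ Order.IsNormal.id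
    (fun _ _ => Order.IsNormal.comp) (isNormal_eVeblen hunb) ξ

theorem isWeakHyperation_hyperexp : IsWeakHyperation eFun hyperexp.{u, v} :=
  ⟨isNormal_hyperexp hunb, cnfProd_zero (M := Function.End _) _,
    (cnfProd_one (M := Function.End _) _).trans eVeblen_zero, hyperexp_add hunb⟩

end Unbounded

/-- Unboundedness of the fixed-point classes is read off from a weak hyperation of `e`: it cannot
be proved outright, as it fails when `Ordinal.{v}` is large compared with `Ordinal.{u}`. -/
theorem IsWeakHyperation.not_bddAbove_eVeblenFix_and_eVeblen_le
    {F : Ordinal.{v} → Ordinal.{u} → Ordinal.{u}} (hF : IsWeakHyperation eFun F)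
    (γ : Ordinal.{v}) :
    ¬BddAbove (eVeblenFix.{u, v} γ) ∧ ∀ x, eVeblen γ x ≤ F (ω ^ γ) x := by
  induction γ using WellFoundedLT.induction with
  | _ γ IH =>
    have hmem : ∀ x, F (ω ^ γ) x ∈ eVeblenFix γ := by
      intro x a ha
      have hnormal := isNormal_eVeblen_of_forall_le a fun b hb => (IH b (hb.trans_lt ha)).1
      refine le_antisymm ?_ hnormal.strictMono.le_apply
      calc eVeblen a (F (ω ^ γ) x) ≤ F (ω ^ a) (F (ω ^ γ) x) := (IH a ha).2 _
        _ = F (ω ^ γ) x :=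
          hF.apply_apply_omega0_opow ((opow_lt_opow_iff_right one_lt_omega0).2 ha) x
    have hFmono := (hF.1 (ω ^ γ)).strictMono
    refine ⟨not_bddAbove_iff.2 fun x =>
      ⟨_, hmem (x + 1), (lt_add_one x).trans_le hFmono.le_apply⟩, fun x => ?_⟩
    rcases eq_or_ne γ 0 with rfl | hγ
    · rw [eVeblen_zero, opow_zero, hF.2.2.1]
    · calc eVeblen γ x ≤ enumOrd (range (F (ω ^ γ))) x := by
            rw [eVeblen_of_ne_zero hγ]
            exact enumOrd_le_of_subset hFmono.not_bddAbove_range_of_wellFoundedLT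
              (range_subset_iff.2 hmem) x
        _ = F (ω ^ γ) x := by rw [enumOrd_range hFmono]

theorem IsWeakHyperation.not_bddAbove_eVeblenFix {F : Ordinal.{v} → Ordinal.{u} → Ordinal.{u}}
    (hF : IsWeakHyperation eFun F) (γ : Ordinal.{v}) : ¬BddAbove (eVeblenFix.{u, v} γ) :=
  (hF.not_bddAbove_eVeblenFix_and_eVeblen_le γ).1

theorem IsWeakHyperation.hyperexp_le {F : Ordinal.{v} → Ordinal.{u} → Ordinal.{u}}
    (hF : IsWeakHyperation eFun F) (ξ : Ordinal.{v}) (x : Ordinal.{u}) :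
    hyperexp ξ x ≤ F ξ x := by
  have hunb := hF.not_bddAbove_eVeblenFix
  induction ξ using induction_on_omega0_opow_add generalizing x with
  | zero => rw [(isWeakHyperation_hyperexp hunb).2.1, hF.2.1]
  | opow γ _ =>
    exact hyperexp_omega0_opow γ ▸ (hF.not_bddAbove_eVeblenFix_and_eVeblen_le γ).2 x
  | add a b _ _ iha ihb =>
    rw [(isWeakHyperation_hyperexp hunb).apply_add, hF.apply_add]
    exact ((isNormal_hyperexp hunb a).monotone (ihb x)).trans (iha _)

theorem IsHyperation.eq_hyperexp {E : Ordinal.{v} → Ordinal.{u} → Ordinal.{u}}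
    (hE : IsHyperation eFun E) : E = hyperexp :=
  funext fun ξ => funext fun x => le_antisymm
    (hE.2 _ (isWeakHyperation_hyperexp hE.1.not_bddAbove_eVeblenFix) ξ x) (hE.1.hyperexp_le ξ x)

section Hyperlog

open Function

noncomputable def leastNonfixed (γ : Ordinal.{v}) (ζ : Ordinal.{u}) : Ordinal.{v} :=
  sInf {a | a < γ ∧ eVeblen a ζ ≠ ζ}

theorem leastNonfixed_spec {γ : Ordinal.{v}} {ζ : Ordinal.{u}} (h : ζ ∉ eVeblenFix γ) :
    leastNonfixed γ ζ < γ ∧ eVeblen (leastNonfixed γ ζ) ζ ≠ ζ := by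
  simp only [eVeblenFix, mem_ofPred_eq, not_forall] at h
  obtain ⟨a, ha, hne⟩ := h
  exact csInf_mem (s := {a | a < γ ∧ eVeblen a ζ ≠ ζ}) ⟨a, ha, hne⟩

open Classical in
/-- `ellVeblen ell γ` is the `ω ^ γ`-th member of the cohyperation of `ell`: it descends through
lower levels until it reaches a common fixed point of the `eVeblen a`, `a < γ`, and then inverts
`eVeblen γ`. The last branch, returning `0`, is never taken. -/
noncomputable def ellVeblen (ell : Ordinal.{u} → Ordinal.{u}) :
    Ordinal.{v} → Ordinal.{u} → Ordinal.{u}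
  | γ, ζ =>
    if γ = 0 then ell ζ
    else if hζ : ζ ∈ eVeblenFix γ then invFun (eVeblen γ) ζ
    else
      have := (leastNonfixed_spec hζ).1
      if ellVeblen ell (leastNonfixed γ ζ) ζ < ζ then
        ellVeblen ell γ (ellVeblen ell (leastNonfixed γ ζ) ζ)
      else 0
termination_by γ ζ => (γ, ζ)
decreasing_by
  · exact Prod.Lex.left _ _ this
  · exact Prod.Lex.right _ ‹_›

variable {ell : Ordinal.{u} → Ordinal.{u}}

theorem ellVeblen_zero : ellVeblen.{u, v} ell 0 = ell := by
  funext ζ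
  rw [ellVeblen, if_pos rfl]

theorem ellVeblen_of_mem {γ : Ordinal.{v}} {ζ : Ordinal.{u}} (hγ : γ ≠ 0)
    (hζ : ζ ∈ eVeblenFix γ) : ellVeblen ell γ ζ = invFun (eVeblen γ) ζ := by
  rw [ellVeblen, if_neg hγ, dif_pos hζ]

theorem ellVeblen_of_not_mem {γ : Ordinal.{v}} {ζ : Ordinal.{u}} (hγ : γ ≠ 0)
    (hζ : ζ ∉ eVeblenFix γ) :
    ellVeblen ell γ ζ = if ellVeblen ell (leastNonfixed γ ζ) ζ < ζ then
      ellVeblen ell γ (ellVeblen ell (leastNonfixed γ ζ) ζ) else 0 := by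
  rw [ellVeblen, if_neg hγ, dif_neg hζ]

section Unbounded

variable (hell : IsEndLog ell) (hunb : ∀ γ : Ordinal.{v}, ¬BddAbove (eVeblenFix.{u, v} γ))
include hell hunb

theorem ellVeblen_le (γ : Ordinal.{v}) (ζ : Ordinal.{u}) : ellVeblen ell γ ζ ≤ ζ := by
  induction ζ using WellFoundedLT.induction with
  | _ ζ IH =>
    rcases eq_or_ne γ 0 with rfl | hγ
    · rw [ellVeblen_zero]
      exact hell.apply_le ζ
    by_cases hζ : ζ ∈ eVeblenFix γ
    · rw [ellVeblen_of_mem hγ hζ]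
      calc invFun (eVeblen γ) ζ ≤ eVeblen γ (invFun (eVeblen γ) ζ) :=
            (isNormal_eVeblen hunb γ).strictMono.le_apply
        _ = ζ := eVeblen_invFun hunb hγ hζ
    rw [ellVeblen_of_not_mem hγ hζ]
    split_ifs with hlt
    · exact (IH _ hlt).trans hlt.le
    · exact zero_le

theorem ellVeblen_eVeblen (γ : Ordinal.{v}) (x : Ordinal.{u}) :
    ellVeblen ell γ (eVeblen γ x) = x := by
  rcases eq_or_ne γ 0 with rfl | hγ
  · rw [ellVeblen_zero, eVeblen_zero]
    exact hell.apply_eFun x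
  · rw [ellVeblen_of_mem hγ (eVeblen_mem_eVeblenFix hunb hγ x)]
    exact leftInverse_invFun (isNormal_eVeblen hunb γ).strictMono.injective x

theorem eVeblen_eq_of_ellVeblen_eq {a : Ordinal.{v}} {ζ : Ordinal.{u}}
    (h : ellVeblen ell a ζ = ζ) : eVeblen a ζ = ζ := by
  rcases eq_or_ne a 0 with rfl | ha
  · rw [ellVeblen_zero] at h
    rw [eVeblen_zero]
    exact hell.eFun_eq_of_apply_eq h
  by_cases hζ : ζ ∈ eVeblenFix a
  · rw [ellVeblen_of_mem ha hζ] at h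
    simpa [h] using eVeblen_invFun hunb ha hζ
  rw [ellVeblen_of_not_mem ha hζ] at h
  split_ifs at h with hlt
  · exact absurd h ((ellVeblen_le hell hunb a _).trans_lt hlt).ne
  · exact absurd (h ▸ zero_mem_eVeblenFix a) hζ

theorem ellVeblen_leastNonfixed_lt {γ : Ordinal.{v}} {ζ : Ordinal.{u}}
    (hζ : ζ ∉ eVeblenFix γ) :
    ellVeblen ell (leastNonfixed γ ζ) ζ < ζ :=
  (ellVeblen_le hell hunb _ ζ).lt_of_ne
    fun h => (leastNonfixed_spec hζ).2 (eVeblen_eq_of_ellVeblen_eq hell hunb h)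

theorem ellVeblen_eq_ellVeblen_leastNonfixed {γ : Ordinal.{v}} {ζ : Ordinal.{u}} (hγ : γ ≠ 0)
    (hζ : ζ ∉ eVeblenFix γ) :
    ellVeblen ell γ ζ = ellVeblen ell γ (ellVeblen ell (leastNonfixed γ ζ) ζ) := by
  rw [ellVeblen_of_not_mem hγ hζ, if_pos (ellVeblen_leastNonfixed_lt hell hunb hζ)]

theorem ellVeblen_of_mem_of_lt {b γ : Ordinal.{v}} {ζ : Ordinal.{u}} (hb : b < γ)
    (hζ : ζ ∈ eVeblenFix γ) : ellVeblen ell b ζ = ζ := by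
  conv_lhs => rw [← hζ b hb]
  exact ellVeblen_eVeblen hell hunb b ζ

theorem ellVeblen_ellVeblen_of_lt {a γ : Ordinal.{v}} (ha : a < γ) (ζ : Ordinal.{u}) :
    ellVeblen ell γ (ellVeblen ell a ζ) = ellVeblen ell γ ζ := by
  induction γ using WellFoundedLT.induction generalizing a ζ with
  | _ γ IHγ =>
    induction ζ using WellFoundedLT.induction generalizing a with
    | _ ζ IHζ =>
      have hγ : γ ≠ 0 := (zero_le.trans_lt ha).ne'
      rcases (ellVeblen_le hell hunb a ζ).eq_or_lt with haζ | haζ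
      · rw [haζ]
      by_cases hζ : ζ ∈ eVeblenFix γ
      · exact absurd (ellVeblen_of_mem_of_lt hell hunb ha hζ) haζ.ne
      -- descending first through either of two lower levels leads to the same value
      have hsame : ∀ a b, a < γ → b < γ → a ≤ b →
          ellVeblen ell a ζ < ζ → ellVeblen ell b ζ < ζ →
          ellVeblen ell γ (ellVeblen ell a ζ) = ellVeblen ell γ (ellVeblen ell b ζ) := by
        intro a b ha hb hab haζ hbζ
        rcases hab.lt_or_eq with hab | rfl
        · rw [← IHζ _ haζ hb, IHγ b hb hab]
        · rfl
      rw [ellVeblen_eq_ellVeblen_leastNonfixed hell hunb hγ hζ]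
      have hp := (leastNonfixed_spec hζ).1
      have hpζ := ellVeblen_leastNonfixed_lt hell hunb hζ
      rcases le_total a (leastNonfixed γ ζ) with h | h
      · exact hsame _ _ ha hp h haζ hpζ
      · exact (hsame _ _ hp ha h hpζ haζ).symm

theorem exists_ellVeblen_eq {γ : Ordinal.{v}} (hγ : γ ≠ 0) (ζ : Ordinal.{u}) :
    ∃ x, eVeblen γ x ≤ ζ ∧ ellVeblen ell γ ζ = x := by
  induction ζ using WellFoundedLT.induction with
  | _ ζ IH =>
    by_cases hζ : ζ ∈ eVeblenFix γ
    · obtain ⟨x, rfl⟩ : ζ ∈ range (eVeblen γ) := range_eVeblen hunb hγ ▸ hζ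
      exact ⟨x, le_rfl, ellVeblen_eVeblen hell hunb γ x⟩
    · have hlt := ellVeblen_leastNonfixed_lt hell hunb hζ
      obtain ⟨x, hx, heq⟩ := IH _ hlt
      exact ⟨x, hx.trans hlt.le,
        (ellVeblen_eq_ellVeblen_leastNonfixed hell hunb hγ hζ).trans heq⟩

theorem isInitialFun_ellVeblen (γ : Ordinal.{v}) : IsInitialFun (ellVeblen.{u, v} ell γ) := by
  rcases eq_or_ne γ 0 with rfl | hγ
  · rw [ellVeblen_zero]
    exact hell.isInitialFun
  refine isInitialFun_of_apply_le (ellVeblen_le hell hunb γ) fun β y z hzy ⟨α, hα, hy⟩ => ?_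
  obtain ⟨x, hx, rfl⟩ := exists_ellVeblen_eq hell hunb hγ α
  subst hy
  refine ⟨eVeblen γ z, ?_, ellVeblen_eVeblen hell hunb γ z⟩
  exact ((isNormal_eVeblen hunb γ).monotone hzy |>.trans hx).trans_lt hα

end Unbounded

/-- `hyperlog ell (ω ^ a₁ + ⋯ + ω ^ aₙ) = ellVeblen ell aₙ ∘ ⋯ ∘ ellVeblen ell a₁`. -/
noncomputable def hyperlog (ell : Ordinal.{u} → Ordinal.{u}) (ξ : Ordinal.{v}) :
    Ordinal.{u} → Ordinal.{u} :=
  (cnfProd (fun γ => MulOpposite.op (α := Function.End _) (ellVeblen ell γ)) ξ).unop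

@[simp]
theorem hyperlog_omega0_opow (γ : Ordinal.{v}) :
    hyperlog.{u, v} ell (ω ^ γ) = ellVeblen ell γ := by
  rw [hyperlog, cnfProd_omega0_opow]
  rfl

theorem isWeakCohyperation_hyperlog (hell : IsEndLog ell)
    (hunb : ∀ γ : Ordinal.{v}, ¬BddAbove (eVeblenFix.{u, v} γ)) :
    IsWeakCohyperation ell (hyperlog.{u, v} ell) := by
  refine ⟨fun ξ => ?_, by rw [hyperlog, cnfProd_zero]; rfl, ?_, fun a b => ?_⟩
  · exact cnfProd_induction (p := fun f : (Function.End _)ᵐᵒᵖ => IsInitialFun f.unop) _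
      isInitialFun_id (fun f g hf hg => hg.comp hf) (isInitialFun_ellVeblen hell hunb) ξ
  · rw [← opow_zero ω, hyperlog_omega0_opow, ellVeblen_zero]
  · have habs : ∀ a b : Ordinal.{v}, a < b →
        MulOpposite.op (α := Function.End _) (ellVeblen ell a) * .op (ellVeblen ell b) =
          .op (ellVeblen ell b) := fun a b hab =>
      MulOpposite.unop_injective (funext (ellVeblen_ellVeblen_of_lt hell hunb hab))
    rw [hyperlog, cnfProd_add habs, MulOpposite.unop_mul]
    rfl

end Hyperlog

section Cohyperation

variable {f : Ordinal.{u} → Ordinal.{u}} {G : Ordinal.{v} → Ordinal.{u} → Ordinal.{u}}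

theorem IsWeakCohyperation.apply_add (hG : IsWeakCohyperation f G) (ξ ζ : Ordinal.{v})
    (x : Ordinal.{u}) : G (ξ + ζ) x = G ζ (G ξ x) :=
  congrFun (hG.2.2.2 ξ ζ) x

theorem IsWeakCohyperation.apply_apply_omega0_opow (hG : IsWeakCohyperation f G)
    {η γ : Ordinal.{v}} (h : η < ω ^ γ) (x : Ordinal.{u}) :
    G (ω ^ γ) (G η x) = G (ω ^ γ) x := by
  rw [← hG.apply_add, add_of_omega0_opow_le h le_rfl]

theorem IsWeakCohyperation.apply_eq_self_of_add (hG : IsWeakCohyperation f G)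
    {a b : Ordinal.{v}} {α : Ordinal.{u}} (h : G (a + b) α = α) :
    G a α = α ∧ G b α = α := by
  rw [hG.apply_add] at h
  have ha : G a α = α :=
    ((hG.1 a).apply_le α).antisymm (h.symm.trans_le ((hG.1 b).apply_le (G a α)))
  rw [ha] at h
  exact ⟨ha, h⟩

end Cohyperation

section Inverse

variable {ell : Ordinal.{u} → Ordinal.{u}} {L : Ordinal.{v} → Ordinal.{u} → Ordinal.{u}}
  (hell : IsEndLog ell) (hunb : ∀ γ : Ordinal.{v}, ¬BddAbove (eVeblenFix.{u, v} γ))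
include hell hunb

theorem IsWeakCohyperation.hyperexp_eq_self_of_apply_eq_self (hL : IsWeakCohyperation ell L)
    {Ξ : Ordinal.{v}} (hinv : ∀ η < Ξ, ∀ x, L η (hyperexp η x) = x) (η : Ordinal.{v})
    (hη : η < Ξ) (α : Ordinal.{u}) (hα : L η α = α) : hyperexp η α = α := by
  have hexp := isWeakHyperation_hyperexp hunb
  induction η using induction_on_omega0_opow_add generalizing α with
  | zero => rw [hexp.2.1, id]
  | add a b hab hbb iha ihb =>
    obtain ⟨ha, hb⟩ := hL.apply_eq_self_of_add hα
    rw [hexp.apply_add, ihb (hbb.trans hη) α hb, iha (hab.trans hη) α ha]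
  | opow γ IH =>
    rw [hyperexp_omega0_opow]
    rcases eq_or_ne γ 0 with rfl | hγ
    · rw [opow_zero, hL.2.2.1] at hα
      rw [eVeblen_zero]
      exact hell.eFun_eq_of_apply_eq hα
    have hfix : α ∈ eVeblenFix γ := by
      intro a ha
      have hlt : ω ^ a < ω ^ γ := (opow_lt_opow_iff_right one_lt_omega0).2 ha
      rw [← add_of_omega0_opow_le hlt le_rfl] at hα
      simpa using IH _ hlt (hlt.trans hη) α (hL.apply_eq_self_of_add hα).1
    obtain ⟨x, rfl⟩ : α ∈ range (eVeblen γ) := range_eVeblen hunb hγ ▸ hfix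
    have hx := hinv _ hη x
    rw [hyperexp_omega0_opow, hα] at hx
    exact congrArg (eVeblen γ) hx

theorem IsWeakCohyperation.exists_apply_omega0_opow_eq (hL : IsWeakCohyperation ell L)
    {γ : Ordinal.{v}} (hγ : γ ≠ 0) (hinv : ∀ η < ω ^ γ, ∀ x, L η (hyperexp η x) = x)
    (α : Ordinal.{u}) :
    ∃ x, eVeblen γ x ≤ α ∧ L (ω ^ γ) α = L (ω ^ γ) (eVeblen γ x) := by
  induction α using WellFoundedLT.induction with
  | _ α IH =>
    by_cases hα : α ∈ eVeblenFix γ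
    · obtain ⟨x, rfl⟩ : α ∈ range (eVeblen γ) := range_eVeblen hunb hγ ▸ hα
      exact ⟨x, le_rfl, rfl⟩
    obtain ⟨ha, hne⟩ := leastNonfixed_spec hα
    have hlt : ω ^ leastNonfixed γ α < ω ^ γ := (opow_lt_opow_iff_right one_lt_omega0).2 ha
    have hLlt : L (ω ^ leastNonfixed γ α) α < α := ((hL.1 _).apply_le α).lt_of_ne fun h =>
      hne (by simpa using hL.hyperexp_eq_self_of_apply_eq_self hell hunb hinv _ hlt α h)
    obtain ⟨x, hx, heq⟩ := IH _ hLlt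
    exact ⟨x, hx.trans hLlt.le, (hL.apply_apply_omega0_opow hlt α).symm.trans heq⟩

theorem IsWeakCohyperation.apply_omega0_opow_eVeblen_le (hL : IsWeakCohyperation ell L)
    {γ : Ordinal.{v}} (hγ : γ ≠ 0) (hinv : ∀ η < ω ^ γ, ∀ x, L η (hyperexp η x) = x)
    (x : Ordinal.{u}) : L (ω ^ γ) (eVeblen γ x) ≤ x := by
  induction x using WellFoundedLT.induction with
  | _ x IH =>
    obtain ⟨β, hβ⟩ := hL.1 (ω ^ γ) (eVeblen γ x + 1)
    by_contra! hxL
    obtain ⟨α, hα, hLα⟩ : x ∈ L (ω ^ γ) '' Iio (eVeblen γ x + 1) := by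
      have hLx : L (ω ^ γ) (eVeblen γ x) ∈ Iio β :=
        hβ ▸ mem_image_of_mem _ (mem_Iio.2 (lt_add_one _))
      exact hβ ▸ hxL.trans hLx
    obtain ⟨y, hyα, hLy⟩ := hL.exists_apply_omega0_opow_eq hell hunb hγ hinv α
    have hyx : y ≤ x := (isNormal_eVeblen hunb γ).strictMono.le_iff_le.1
      (hyα.trans (Order.lt_add_one_iff.1 hα))
    rw [hLα] at hLy
    rcases hyx.lt_or_eq with hyx | rfl
    · exact (IH y hyx).not_gt (hLy ▸ hyx)
    · exact hxL.ne hLy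

theorem IsCohyperation.apply_hyperexp (hL : IsCohyperation ell L) (ξ : Ordinal.{v})
    (x : Ordinal.{u}) : L ξ (hyperexp ξ x) = x := by
  induction ξ using induction_on_omega0_opow_add generalizing x with
  | zero => rw [(isWeakHyperation_hyperexp hunb).2.1, hL.1.2.1, id, id]
  | add a b _ _ iha ihb => rw [(isWeakHyperation_hyperexp hunb).apply_add, hL.1.apply_add, iha, ihb]
  | opow γ IH =>
    rw [hyperexp_omega0_opow]
    rcases eq_or_ne γ 0 with rfl | hγ
    · rw [opow_zero, hL.1.2.2.1, eVeblen_zero]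
      exact hell.apply_eFun x
    refine (hL.1.apply_omega0_opow_eVeblen_le hell hunb hγ IH x).antisymm ?_
    calc x = hyperlog ell (ω ^ γ) (eVeblen γ x) := by
          rw [hyperlog_omega0_opow, ellVeblen_eVeblen hell hunb]
      _ ≤ L (ω ^ γ) (eVeblen γ x) := hL.2 _ (isWeakCohyperation_hyperlog hell hunb) _ _

end Inverse

/-- Let `E` be the hyperation of `e` and `L` the cohyperation of the end-logarithm
`ℓ`. Then `L (ω^ρ) (E (ω^β) ξ)` equals `E (ω^β) ξ` if `ω^ρ < ω^β`, equals `ξ` if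
`ω^ρ = ω^β`, and equals `L (ω^ρ) ξ` if `ω^ρ > ω^β`. -/
theorem stmt18 (ell : Ordinal → Ordinal) (hell : IsEndLog ell)
    (E L : Ordinal → Ordinal → Ordinal)
    (hE : IsHyperation eFun E) (hL : IsCohyperation ell L)
    (ρ β ξ : Ordinal) :
    (ω ^ ρ < ω ^ β → L (ω ^ ρ) (E (ω ^ β) ξ) = E (ω ^ β) ξ) ∧
    (ω ^ ρ = ω ^ β → L (ω ^ ρ) (E (ω ^ β) ξ) = ξ) ∧
    (ω ^ β < ω ^ ρ → L (ω ^ ρ) (E (ω ^ β) ξ) = L (ω ^ ρ) ξ) := by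
  have hunb := hE.1.not_bddAbove_eVeblenFix
  have hinv := hL.apply_hyperexp hell hunb
  obtain rfl := hE.eq_hyperexp
  refine ⟨fun hlt => ?_, fun heq => ?_, fun hlt => ?_⟩
  · have h := hinv (ω ^ ρ) (hyperexp (ω ^ β) ξ)
    rwa [hE.1.apply_apply_omega0_opow hlt] at h
  · rw [heq, hinv]
  · rw [← hL.1.apply_apply_omega0_opow hlt, hinv]
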